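/- Let ω := √3/2, let P be the 2×2 real matrix [[1, 0], [−1/2, √3/6]], let F₀(x, y) := (3/2 − x/2 − x·y³, 1/2 − (3/2)·y + x·y³), and define G : ℝ² → ℝ² by G(u, v) := P⁻¹ · F₀(u + 1, −u/2 + (√3/6)·v + 1). Then G(0, 0) = (0, 0), the total derivative of G at (0,0) is the matrix [[0, −ω], [ω, 0]], and, writing (f¹, f²) := G(u,v) − ([[0,−ω],[ω,0]]·(u,v)) for the nonlinear part and denoting by subscripts its partial derivatives evaluated at (0,0), one has (1/16)(f¹_{uuu} + f¹_{uvv} + f²_{uuv} + f²_{vvv}) + (1/(16ω))(f¹_{uv}(f¹_{uu} + f¹_{vv}) − f²_{uv}(f²_{uu} + f²_{vv}) − f¹_{uu}·f²_{uu} + f¹_{vv}·f²_{vv}) = −1/8. -/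

import Mathlib

noncomputable section

/-- `ω = √3/2`. -/
def ω12 : ℝ := Real.sqrt 3 / 2

/-- The change-of-variables matrix `P = [[1, 0], [−1/2, √3/6]]`. -/
def P12 : Matrix (Fin 2) (Fin 2) ℝ := !![1, 0; -1/2, Real.sqrt 3 / 6]

/-- The vector field at the bifurcation value `k = 0`:
`F₀(x,y) = (3/2 − x/2 − xy³, 1/2 − (3/2)y + xy³)`. -/
def F0 : (Fin 2 → ℝ) → (Fin 2 → ℝ) :=
  fun p => ![3/2 - p 0 / 2 - p 0 * (p 1) ^ 3, 1/2 - 3/2 * p 1 + p 0 * (p 1) ^ 3]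

/-- `G(u,v) = P⁻¹ · F₀(u + 1, −u/2 + (√3/6)v + 1)`. -/
def G12 : (Fin 2 → ℝ) → (Fin 2 → ℝ) :=
  fun z => P12⁻¹.mulVec (F0 (P12.mulVec z + ![1, 1]))

/-- The nonlinear part `f = (f¹, f²)` of `G`. -/
def f12 : (Fin 2 → ℝ) → (Fin 2 → ℝ) :=
  fun z => G12 z - (!![0, -ω12; ω12, 0]).mulVec z

/-- First component of the nonlinear part, as a function of `(u, v)`. -/
def f1 (u v : ℝ) : ℝ := f12 ![u, v] 0

/-- Second component of the nonlinear part, as a function of `(u, v)`. -/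
def f2 (u v : ℝ) : ℝ := f12 ![u, v] 1

end

/-! The substitution is affine, so `G = P⁻¹ ∘ F₀ ∘ (P · + (1, 1))` and its derivative at
the origin is the conjugate `P⁻¹ · DF₀(1, 1) · P` of the Jacobian at the equilibrium `(1, 1)`,
which `P` brings to the rotation form `[[0, -ω], [ω, 0]]`. The nonlinear part is polynomial
of degree four: writing it as a quartic in `u` whose coefficients are quartics in `v`, every
partial derivative at the origin is a Taylor coefficient times a factorial, and the Lyapunov
quantity becomes arithmetic in `√3`. -/

open Matrix

lemma P12_inv : P12⁻¹ = !![1, 0; √3, 2 * √3] := by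
  refine inv_eq_right_inv ?_
  have h : √3 * √3 = 3 := Real.mul_self_sqrt (by norm_num)
  rw [P12, mul_fin_two, one_fin_two]
  ext i j
  fin_cases i <;> fin_cases j <;> simp <;> grind

noncomputable def jacobianF0 (p : Fin 2 → ℝ) : Matrix (Fin 2) (Fin 2) ℝ :=
  !![-1/2 - p 1 ^ 3, -3 * p 0 * p 1 ^ 2; p 1 ^ 3, -3/2 + 3 * p 0 * p 1 ^ 2]

lemma hasFDerivAt_F0 (p : Fin 2 → ℝ) :
    HasFDerivAt F0 (toLin' (jacobianF0 p)).toContinuousLinearMap p := by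
  have h0 := hasFDerivAt_apply (𝕜 := ℝ) 0 p
  have h1 := hasFDerivAt_apply (𝕜 := ℝ) 1 p
  refine hasFDerivAt_pi'' (Fin.forall_fin_two.2 ?_)
  simp only [F0, div_eq_mul_inv, cons_val_zero, cons_val_one, cons_val_fin_one]
  refine ⟨(((hasFDerivAt_const _ p).sub (h0.mul_const 2⁻¹)).sub
      (h0.mul (h1.pow 3))).congr_fderiv ?_,
    (((hasFDerivAt_const _ p).sub (h1.const_mul (3/2))).add
      (h0.mul (h1.pow 3))).congr_fderiv ?_⟩ <;>
  · ext z
    simp only [ContinuousLinearMap.comp_apply, LinearMap.coe_toContinuousLinearMap', toLin'_apply,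
      mulVec_fin_two, jacobianF0, of_apply, cons_val', cons_val_zero, cons_val_one, empty_val',
      cons_val_fin_one, _root_.sub_apply, _root_.add_apply, _root_.smul_apply, _root_.zero_apply,
      ContinuousLinearMap.proj_apply, smul_eq_mul, nsmul_eq_mul]
    ring

lemma P12_inv_mul_jacobianF0_mul_P12 :
    P12⁻¹ * jacobianF0 ![1, 1] * P12 = !![0, -ω12; ω12, 0] := by
  have h : √3 * √3 = 3 := Real.mul_self_sqrt (by norm_num)
  rw [P12_inv, jacobianF0, P12, mul_fin_two, mul_fin_two, ω12]
  ext i j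
  fin_cases i <;> fin_cases j <;> simp <;> grind

lemma hasFDerivAt_G12 :
    HasFDerivAt G12 (toLin' !![0, -ω12; ω12, 0]).toContinuousLinearMap ![0, 0] := by
  have hP : HasFDerivAt (fun z => P12 *ᵥ z + ![1, 1]) (toLin' P12).toContinuousLinearMap ![0, 0] :=
    (toLin' P12).toContinuousLinearMap.hasFDerivAt.add_const _
  have hF : HasFDerivAt F0 (toLin' (jacobianF0 ![1, 1])).toContinuousLinearMap
      (P12 *ᵥ ![0, 0] + ![1, 1]) := by
    simpa using hasFDerivAt_F0 ![1, 1]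
  refine ((toLin' P12⁻¹).toContinuousLinearMap.hasFDerivAt.comp ![0, 0]
    (hF.comp ![0, 0] hP)).congr_fderiv ?_
  ext z : 1
  simp [← P12_inv_mul_jacobianF0_mul_P12]

lemma G12_apply (u v : ℝ) :
    G12 ![u, v] = !![1, 0; √3, 2 * √3] *ᵥ F0 ![u + 1, -u / 2 + √3 / 6 * v + 1] := by
  rw [G12, P12_inv, P12, mulVec_fin_two _ ![u, v], vec2_add]
  simp only [of_apply, cons_val', cons_val_zero, cons_val_one, empty_val', cons_val_fin_one]
  congr 2
  exact vec2_eq (by ring) (by ring)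

lemma G12_zero : G12 ![0, 0] = ![0, 0] := by
  have hF : F0 ![1, 1] = 0 := by
    ext i; fin_cases i <;> norm_num [F0]
  ext i; fin_cases i <;> simp [G12_apply, hF]

section Quartic

variable {𝕜 : Type*} [NontriviallyNormedField 𝕜]

def quartic (a b c d e x : 𝕜) : 𝕜 := a + b * x + c * x ^ 2 + d * x ^ 3 + e * x ^ 4

@[simp] lemma quartic_zero (a b c d e : 𝕜) : quartic a b c d e 0 = a := by simp [quartic]

lemma hasDerivAt_quartic (a b c d e x : 𝕜) :
    HasDerivAt (quartic a b c d e) (quartic b (2 * c) (3 * d) (4 * e) 0 x) x := by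
  refine ((((hasDerivAt_const x a).add ((hasDerivAt_id' x).const_mul b)).add
    ((hasDerivAt_pow 2 x).const_mul c)).add ((hasDerivAt_pow 3 x).const_mul d)).add
    ((hasDerivAt_pow 4 x).const_mul e) |>.congr_deriv ?_
  simp only [quartic]
  ring

@[simp] lemma deriv_quartic (a b c d e : 𝕜) :
    deriv (quartic a b c d e) = quartic b (2 * c) (3 * d) (4 * e) 0 :=
  funext fun x => (hasDerivAt_quartic a b c d e x).deriv

end Quartic

lemma f1_eq (u v : ℝ) : f1 u v = quartic (quartic 0 0 (-1/4) (-√3/72) 0 v)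
    (quartic 0 0 (-1/8) (-√3/72) 0 v) (quartic (3/4) (3 * √3/8) (1/8) 0 0 v)
    (quartic (-5/8) (-√3/8) 0 0 0 v) (1/8) u := by
  have h : √3 ^ 2 = 3 := Real.sq_sqrt (by norm_num)
  simp only [f1, f12, G12_apply, F0, mulVec_fin_two, Pi.sub_apply, of_apply, cons_val',
    cons_val_zero, cons_val_one, empty_val', cons_val_fin_one, quartic, ω12]
  grind

lemma f2_eq (u v : ℝ) : f2 u v = quartic (quartic 0 0 (√3/4) (1/24) 0 v)
    (quartic 0 0 (√3/8) (1/24) 0 v) (quartic (-3 * √3/4) (-9/8) (-√3/8) 0 0 v)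
    (quartic (5 * √3/8) (3/8) 0 0 0 v) (-√3/8) u := by
  have h : √3 ^ 2 = 3 := Real.sq_sqrt (by norm_num)
  simp only [f2, f12, G12_apply, F0, mulVec_fin_two, Pi.sub_apply, of_apply, cons_val',
    cons_val_zero, cons_val_one, empty_val', cons_val_fin_one, quartic, ω12]
  grind

lemma firstLyapunovQuantity_eq :
    (1 / 16) * (iteratedDeriv 3 (fun u => f1 u 0) 0
        + iteratedDeriv 2 (fun v => deriv (fun u => f1 u v) 0) 0
        + deriv (fun v => iteratedDeriv 2 (fun u => f2 u v) 0) 0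
        + iteratedDeriv 3 (fun v => f2 0 v) 0)
      + (1 / (16 * ω12)) *
        (deriv (fun v => deriv (fun u => f1 u v) 0) 0 *
            (iteratedDeriv 2 (fun u => f1 u 0) 0 + iteratedDeriv 2 (fun v => f1 0 v) 0)
          - deriv (fun v => deriv (fun u => f2 u v) 0) 0 *
            (iteratedDeriv 2 (fun u => f2 u 0) 0 + iteratedDeriv 2 (fun v => f2 0 v) 0)
          - iteratedDeriv 2 (fun u => f1 u 0) 0 * iteratedDeriv 2 (fun u => f2 u 0) 0
          + iteratedDeriv 2 (fun v => f1 0 v) 0 * iteratedDeriv 2 (fun v => f2 0 v) 0)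
      = -1/8 := by
  have f1_uuu : iteratedDeriv 3 (fun u => f1 u 0) 0 = -15/4 := by
    norm_num [f1_eq, iteratedDeriv_succ']
  have f1_uvv : iteratedDeriv 2 (fun v => deriv (fun u => f1 u v) 0) 0 = -1/4 := by
    norm_num [f1_eq, iteratedDeriv_succ']
  have f2_uuv : deriv (fun v => iteratedDeriv 2 (fun u => f2 u v) 0) 0 = -9/4 := by
    norm_num [f2_eq, iteratedDeriv_succ']
  have f2_vvv : iteratedDeriv 3 (fun v => f2 0 v) 0 = 1/4 := by
    norm_num [f2_eq, iteratedDeriv_succ']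
  have f1_uv : deriv (fun v => deriv (fun u => f1 u v) 0) 0 = 0 := by
    simp [f1_eq]
  have f2_uv : deriv (fun v => deriv (fun u => f2 u v) 0) 0 = 0 := by
    simp [f2_eq]
  have f1_uu : iteratedDeriv 2 (fun u => f1 u 0) 0 = 3/2 := by
    norm_num [f1_eq, iteratedDeriv_succ']
  have f1_vv : iteratedDeriv 2 (fun v => f1 0 v) 0 = -1/2 := by
    norm_num [f1_eq, iteratedDeriv_succ']
  have f2_uu : iteratedDeriv 2 (fun u => f2 u 0) 0 = -3 * √3 / 2 := by
    norm_num [f2_eq, iteratedDeriv_succ']; ring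
  have f2_vv : iteratedDeriv 2 (fun v => f2 0 v) 0 = √3 / 2 := by
    norm_num [f2_eq, iteratedDeriv_succ']; ring
  rw [f1_uuu, f1_uvv, f2_uuv, f2_vvv, f1_uv, f2_uv, f1_uu, f1_vv, f2_uu, f2_vv, ω12]
  field_simp
  ring

/-- `G(0,0) = (0,0)`, the total derivative of `G` at the origin is
`[[0, −ω], [ω, 0]]`, and the first Lyapunov quantity, the displayed combination of
second and third partial derivatives of the nonlinear part at the origin,
equals `−1/8`. -/
theorem stmt_12 :
    G12 ![0, 0] = ![0, 0] ∧
    DifferentiableAt ℝ G12 ![0, 0] ∧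
    fderiv ℝ G12 ![0, 0] ![1, 0] = ![0, ω12] ∧
    fderiv ℝ G12 ![0, 0] ![0, 1] = ![-ω12, 0] ∧
    (1 / 16) * (iteratedDeriv 3 (fun u => f1 u 0) 0
        + iteratedDeriv 2 (fun v => deriv (fun u => f1 u v) 0) 0
        + deriv (fun v => iteratedDeriv 2 (fun u => f2 u v) 0) 0
        + iteratedDeriv 3 (fun v => f2 0 v) 0)
      + (1 / (16 * ω12)) *
        (deriv (fun v => deriv (fun u => f1 u v) 0) 0 *
            (iteratedDeriv 2 (fun u => f1 u 0) 0 + iteratedDeriv 2 (fun v => f1 0 v) 0)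
          - deriv (fun v => deriv (fun u => f2 u v) 0) 0 *
            (iteratedDeriv 2 (fun u => f2 u 0) 0 + iteratedDeriv 2 (fun v => f2 0 v) 0)
          - iteratedDeriv 2 (fun u => f1 u 0) 0 * iteratedDeriv 2 (fun u => f2 u 0) 0
          + iteratedDeriv 2 (fun v => f1 0 v) 0 * iteratedDeriv 2 (fun v => f2 0 v) 0)
      = -1/8 := by
  refine ⟨G12_zero, hasFDerivAt_G12.differentiableAt, ?_, ?_, firstLyapunovQuantity_eq⟩
  all_goals
    rw [hasFDerivAt_G12.fderiv]
    ext i; fin_cases i <;> simp
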